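/- Let Ω_R = {1 < x² + y² < 4} ⊂ ℝ² and remove from it the sequence of almost-full circles S_{2n} = {x²+y² = (1+1/(2n))², x < 1−r} and S_{2n+1} = {x²+y² = (1+1/(2n+1))², x > r−1} for fixed 0 < r < 1/4. The resulting open set Ω is a bounded domain with infinite geodesic diameter. -/

import Mathlib

open Set ENNReal

open Set ENNReal

/-- The intrinsic geodesic distance in `Ω`: the infimum of lengths (variations) of
continuous curves joining `x` to `y` inside `Ω`. -/
noncomputable def geoDist {E : Type*} [PseudoEMetricSpace E] (Ω : Set E) (x y : E) : ℝ≥0∞ :=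
  ⨅ (γ : ℝ → E) (_ : ContinuousOn γ (Set.Icc 0 1)) (_ : Set.MapsTo γ (Set.Icc 0 1) Ω)
    (_ : γ 0 = x) (_ : γ 1 = y), eVariationOn γ (Set.Icc 0 1)

/-- The geodesic diameter of `Ω`. -/
noncomputable def geoDiam {E : Type*} [PseudoEMetricSpace E] (Ω : Set E) : ℝ≥0∞ :=
  ⨆ x ∈ Ω, ⨆ y ∈ Ω, geoDist Ω x y

/-!
Write `ρ k = arcRadius k = 1 + 1/k`. Of the circle `‖p‖ = ρ k` (`k ≥ 2`) only an open arc
survives in `Ω`, lying in `x > 1 - r` for even `k` and in `x < r - 1` for odd `k`; consecutive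
surviving arcs are therefore more than `2 - 2r` apart. A curve in `Ω` from the circle of radius
`ρ (2 + n)` to the circle of radius `ρ 2` meets every circle in between, necessarily in its
surviving arc, so its length is at least `n (2 - 2r)`. For connectedness, cover `Ω` by the open
shells `ρ (n + 3) < ‖p‖ < ρ (n + 1)` with the removed arc of the middle circle deleted: each is the
union of two connected open shells glued along the surviving arc, and consecutive ones overlap.
-/

theorem le_geoDist {E : Type*} [PseudoEMetricSpace E] {Ω : Set E} {x y : E} {c : ℝ≥0∞}
    (h : ∀ γ : ℝ → E, ContinuousOn γ (Icc 0 1) → MapsTo γ (Icc 0 1) Ω → γ 0 = x → γ 1 = y →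
      c ≤ eVariationOn γ (Icc 0 1)) :
    c ≤ geoDist Ω x y :=
  le_iInf fun γ => le_iInf₂ fun hγ hΩ => le_iInf₂ fun h0 h1 => h γ hγ hΩ h0 h1

theorem geoDist_le_geoDiam {E : Type*} [PseudoEMetricSpace E] {Ω : Set E} {x y : E}
    (hx : x ∈ Ω) (hy : y ∈ Ω) : geoDist Ω x y ≤ geoDiam Ω :=
  le_iSup₂_of_le x hx (le_iSup₂ (f := fun y (_ : y ∈ Ω) => geoDist Ω x y) y hy)

open Metric

theorem isOpen_setOf_norm_eq_imp {E : Type*} [SeminormedAddCommGroup E] {P : E → Prop}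
    (hP : IsOpen {p | P p}) (b : ℝ) : IsOpen {p : E | ‖p‖ = b → P p} := by
  simp only [imp_iff_not_or, ofPred_or]
  exact (isClosed_eq continuous_norm continuous_const).isOpen_compl.union hP

section NormShells

variable {E : Type*} [NormedAddCommGroup E] [NormedSpace ℝ E]

theorem setOf_norm_mem_eq_image_smul_sphere {s : Set ℝ} (hs : s ⊆ Ioi 0) :
    {p : E | ‖p‖ ∈ s} = (fun x : ℝ × E => x.1 • x.2) '' (s ×ˢ sphere 0 1) := by
  ext p
  constructor
  · intro hp
    have hp0 : 0 < ‖p‖ := hs hp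
    refine ⟨(‖p‖, ‖p‖⁻¹ • p), ⟨hp, ?_⟩, ?_⟩
    · simp [norm_smul, hp0.ne']
    · simp [smul_smul, hp0.ne']
  · rintro ⟨⟨t, u⟩, ⟨ht, hu⟩, rfl⟩
    have ht0 : 0 < t := hs ht
    simpa [norm_smul, abs_of_pos ht0, mem_sphere_zero_iff_norm.1 hu] using ht

theorem isPreconnected_setOf_norm_mem (hE : 1 < Module.rank ℝ E) {s : Set ℝ}
    (hs : IsPreconnected s) (hs0 : s ⊆ Ioi 0) : IsPreconnected {p : E | ‖p‖ ∈ s} := by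
  rw [setOf_norm_mem_eq_image_smul_sphere hs0]
  exact (hs.prod (isPreconnected_sphere hE 0 1)).image _ (by fun_prop)

theorem setOf_norm_mem_Icc_subset_closure {a b : ℝ} (ha : 0 < a) (hab : a < b) :
    {p : E | ‖p‖ ∈ Icc a b} ⊆ closure {p : E | ‖p‖ ∈ Ioo a b} := by
  have h := image_closure_subset_closure_image (f := fun x : ℝ × E => x.1 • x.2)
    (s := Ioo a b ×ˢ sphere 0 1) (by fun_prop)
  rwa [closure_prod_eq, closure_Ioo hab.ne, isClosed_sphere.closure_eq,
    ← setOf_norm_mem_eq_image_smul_sphere fun t ht => ha.trans_le ht.1,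
    ← setOf_norm_mem_eq_image_smul_sphere fun t ht => ha.trans ht.1] at h

theorem isPreconnected_setOf_norm_mem_Ioo_imp (hE : 1 < Module.rank ℝ E) {a b c : ℝ}
    (ha : 0 < a) (hab : a < b) (hbc : b < c) {P : E → Prop} (hP : ∃ p, ‖p‖ = b ∧ P p) :
    IsPreconnected {p : E | ‖p‖ ∈ Ioo a c ∧ (‖p‖ = b → P p)} := by
  set G := {p : E | ‖p‖ = b ∧ P p}
  have hinner : IsPreconnected ({p : E | ‖p‖ ∈ Ioo a b} ∪ G) :=
    (isPreconnected_setOf_norm_mem hE isPreconnected_Ioo fun t ht => ha.trans ht.1).subset_closure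
      subset_union_left <| union_subset subset_closure fun p hp =>
        setOf_norm_mem_Icc_subset_closure ha hab ⟨hp.1 ▸ hab.le, hp.1.le⟩
  have houter : IsPreconnected (G ∪ {p : E | ‖p‖ ∈ Ioo b c}) :=
    (isPreconnected_setOf_norm_mem hE isPreconnected_Ioo
      fun t ht => ha.trans (hab.trans ht.1)).subset_closure subset_union_right <|
        union_subset (fun p hp => setOf_norm_mem_Icc_subset_closure (ha.trans hab) hbc
          ⟨hp.1.ge, hp.1 ▸ hbc.le⟩) subset_closure
  obtain ⟨p, hp⟩ := hP
  convert hinner.union p (mem_union_right _ hp) (mem_union_left _ hp) houter using 1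
  ext q
  simp only [G, mem_ofPred_eq, mem_union, mem_Ioo]
  rcases lt_trichotomy ‖q‖ b with h | h | h
  · simp [h.ne, h.not_gt, h, h.trans hbc]
  · simp [h, hab, hbc]
  · simp [h.ne', h.not_gt, h, hab.trans h]

end NormShells

theorem one_lt_rank_euclideanSpace_fin_two : 1 < Module.rank ℝ (EuclideanSpace ℝ (Fin 2)) := by
  rw [← Module.finrank_eq_rank, finrank_euclideanSpace_fin]
  norm_num

namespace AnnulusComb

noncomputable def arcRadius (k : ℕ) : ℝ := 1 + 1 / k

theorem arcRadius_one : arcRadius 1 = 2 := by norm_num [arcRadius]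

theorem one_lt_arcRadius {k : ℕ} (hk : k ≠ 0) : 1 < arcRadius k := by
  simp [arcRadius, Nat.pos_of_ne_zero hk]

theorem arcRadius_strictAntiOn : StrictAntiOn arcRadius (Ici 1) := fun j hj k _ hjk => by
  simp only [arcRadius, add_lt_add_iff_left]
  exact one_div_lt_one_div_of_lt (by exact_mod_cast hj) (by exact_mod_cast hjk)

theorem arcRadius_lt_arcRadius_iff {j k : ℕ} (hj : j ≠ 0) (hk : k ≠ 0) :
    arcRadius j < arcRadius k ↔ k < j :=
  arcRadius_strictAntiOn.lt_iff_gt (Nat.one_le_iff_ne_zero.2 hj) (Nat.one_le_iff_ne_zero.2 hk)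

theorem arcRadius_lt_arcRadius {j k : ℕ} (hj : j ≠ 0) (hjk : j < k) : arcRadius k < arcRadius j :=
  (arcRadius_lt_arcRadius_iff (by omega) hj).2 hjk

theorem arcRadius_le_two {k : ℕ} (hk : k ≠ 0) : arcRadius k ≤ 2 := by
  rcases (Nat.one_le_iff_ne_zero.2 hk).eq_or_lt with rfl | hk1
  · exact arcRadius_one.le
  · exact arcRadius_one ▸ (arcRadius_lt_arcRadius one_ne_zero hk1).le

theorem exists_arcRadius_mem_Ioc {s : ℝ} (hs1 : 1 < s) (hs2 : s ≤ 2) :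
    ∃ k, k ≠ 0 ∧ s ∈ Ioc (arcRadius (k + 1)) (arcRadius k) := by
  have hs : 0 < s - 1 := sub_pos.2 hs1
  set k := ⌊1 / (s - 1)⌋₊
  have hk : k ≠ 0 := (Nat.floor_pos.2 ((one_le_div hs).2 (by linarith))).ne'
  have hk0 : (0 : ℝ) < k := by positivity
  refine ⟨k, hk, ?_, ?_⟩
  · have := (one_div_lt hs (by positivity)).1 (Nat.lt_floor_add_one (1 / (s - 1)))
    simp only [arcRadius]
    push_cast
    linarith
  · have := (le_one_div hk0 hs).1 (Nat.floor_le (one_div_pos.2 hs).le)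
    simp only [arcRadius]
    linarith

abbrev E2 := EuclideanSpace ℝ (Fin 2)

/-- The side of the circle of radius `arcRadius k` on which it is not removed. -/
def InGap (r : ℝ) (k : ℕ) (p : E2) : Prop := if Even k then 1 - r < p 0 else p 0 < r - 1

theorem isOpen_setOf_inGap (r : ℝ) (k : ℕ) : IsOpen {p | InGap r k p} := by
  unfold InGap
  split_ifs
  · exact isOpen_lt continuous_const (by fun_prop)
  · exact isOpen_lt (by fun_prop) continuous_const

theorem sub_lt_dist_of_inGap_succ {r : ℝ} {k : ℕ} {p q : E2} (hp : InGap r k p)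
    (hq : InGap r (k + 1) q) : 2 - 2 * r < dist p q := by
  have hx : 2 - 2 * r < |p 0 - q 0| := by
    unfold InGap at hp hq
    rcases Nat.even_or_odd k with hk | hk
    · simp only [hk, if_true, Nat.even_add_one, not_true, if_false] at hp hq
      exact lt_abs.2 (Or.inl (by linarith))
    · simp only [Nat.not_even_iff_odd.2 hk, if_false, Nat.even_add_one, not_false_iff, if_true]
        at hp hq
      exact lt_abs.2 (Or.inr (by linarith))
  exact hx.trans_le (Real.dist_eq (p 0) (q 0) ▸ PiLp.dist_apply_le p q 0)

def combDomain (r : ℝ) : Set E2 :=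
  {p | 1 < ‖p‖ ∧ ‖p‖ < 2 ∧ ∀ k, 2 ≤ k → ‖p‖ = arcRadius k → InGap r k p}

theorem annulus_diff_arcs_eq_combDomain (r : ℝ) :
    {q : E2 | 1 < (q 0) ^ 2 + (q 1) ^ 2 ∧ (q 0) ^ 2 + (q 1) ^ 2 < 4} \
      ((⋃ n : ℕ, {q : E2 | (q 0) ^ 2 + (q 1) ^ 2 = (1 + 1 / (2 * (n + 1) : ℝ)) ^ 2 ∧
          q 0 ≤ 1 - r}) ∪
        ⋃ n : ℕ, {q : E2 | (q 0) ^ 2 + (q 1) ^ 2 = (1 + 1 / (2 * (n + 1) + 1 : ℝ)) ^ 2 ∧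
          r - 1 ≤ q 0}) = combDomain r := by
  have hnorm (q : E2) : q 0 ^ 2 + q 1 ^ 2 = ‖q‖ ^ 2 := by
    rw [EuclideanSpace.real_norm_sq_eq, Fin.sum_univ_two]
  have hradius (q : E2) (k : ℕ) :
      q 0 ^ 2 + q 1 ^ 2 = (1 + 1 / (k : ℝ)) ^ 2 ↔ ‖q‖ = arcRadius k := by
    rw [hnorm, sq_eq_sq₀ (norm_nonneg q) (by positivity), arcRadius]
  have heven (n : ℕ) : (2 * (n + 1) : ℝ) = ((2 * (n + 1) : ℕ) : ℝ) := by push_cast; ring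
  have hodd (n : ℕ) : (2 * (n + 1) + 1 : ℝ) = ((2 * (n + 1) + 1 : ℕ) : ℝ) := by push_cast; ring
  ext q
  simp only [hodd]
  simp only [heven, hradius]
  simp only [mem_sdiff, mem_ofPred_eq, mem_union, mem_iUnion, not_or, not_exists, not_and, not_le,
    hnorm, combDomain]
  rw [and_assoc]
  refine and_congr (one_lt_sq_iff₀ (norm_nonneg q)) (and_congr ?_ ?_)
  · rw [show (4 : ℝ) = 2 ^ 2 by norm_num, sq_lt_sq₀ (norm_nonneg q) zero_le_two]
  constructor
  · rintro ⟨hright, hleft⟩ k hk hq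
    obtain ⟨m, rfl | rfl⟩ := Nat.even_or_odd' k
    · obtain ⟨n, rfl⟩ : ∃ n, m = n + 1 := ⟨m - 1, by omega⟩
      simpa [InGap] using hright n hq
    · obtain ⟨n, rfl⟩ : ∃ n, m = n + 1 := ⟨m - 1, by omega⟩
      simpa [InGap, Nat.even_add_one] using hleft n hq
  · intro h
    exact ⟨fun n hq => by simpa [InGap] using h _ (by omega) hq,
      fun n hq => by simpa [InGap, Nat.even_add_one] using h _ (by omega) hq⟩

theorem isBounded_combDomain (r : ℝ) : Bornology.IsBounded (combDomain r) :=
  isBounded_ball.subset fun _ hp => mem_ball_zero_iff.2 hp.2.1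

noncomputable def gapPoint (k : ℕ) : E2 := EuclideanSpace.single 0 ((-1) ^ k * arcRadius k)

theorem norm_gapPoint (k : ℕ) : ‖gapPoint k‖ = arcRadius k := by
  rw [gapPoint, PiLp.norm_single, norm_mul, norm_pow, norm_neg, norm_one, one_pow,
    one_mul, Real.norm_of_nonneg (by unfold arcRadius; positivity)]

theorem inGap_gapPoint {r : ℝ} (hr0 : 0 < r) {k : ℕ} (hk : k ≠ 0) : InGap r k (gapPoint k) := by
  have hx : gapPoint k 0 = (-1) ^ k * arcRadius k := by simp [gapPoint]
  have := one_lt_arcRadius hk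
  rcases Nat.even_or_odd k with h | h
  · simp only [InGap, h, if_true, hx, h.neg_one_pow, one_mul]
    linarith
  · simp only [InGap, Nat.not_even_iff_odd.2 h, if_false, hx, h.neg_one_pow, neg_one_mul]
    linarith

def cell (r : ℝ) (n : ℕ) : Set E2 :=
  {p | ‖p‖ ∈ Ioo (arcRadius (n + 3)) (arcRadius (n + 1)) ∧
    (‖p‖ = arcRadius (n + 2) → InGap r (n + 2) p)}

theorem isOpen_cell (r : ℝ) (n : ℕ) : IsOpen (cell r n) :=
  (isOpen_Ioo.preimage continuous_norm).inter (isOpen_setOf_norm_eq_imp (isOpen_setOf_inGap r _) _)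

theorem gapPoint_mem_cell {r : ℝ} (hr0 : 0 < r) (n : ℕ) : gapPoint (n + 2) ∈ cell r n := by
  refine ⟨?_, fun _ => inGap_gapPoint hr0 (by omega)⟩
  rw [norm_gapPoint]
  exact ⟨arcRadius_lt_arcRadius (by omega) (by omega),
    arcRadius_lt_arcRadius (by omega) (by omega)⟩

theorem isPreconnected_cell {r : ℝ} (hr0 : 0 < r) (n : ℕ) : IsPreconnected (cell r n) :=
  isPreconnected_setOf_norm_mem_Ioo_imp one_lt_rank_euclideanSpace_fin_two
    (zero_lt_one.trans (one_lt_arcRadius (by omega)))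
    (arcRadius_lt_arcRadius (by omega) (by omega)) (arcRadius_lt_arcRadius (by omega) (by omega))
    ⟨gapPoint (n + 2), norm_gapPoint _, inGap_gapPoint hr0 (by omega)⟩

theorem cell_inter_cell_succ_nonempty (r : ℝ) (n : ℕ) :
    (cell r n ∩ cell r (n + 1)).Nonempty := by
  obtain ⟨t, ht₁, ht₂⟩ :=
    exists_between (arcRadius_lt_arcRadius (j := n + 2) (k := n + 3) (by omega) (by omega))
  have ht : ‖EuclideanSpace.single (0 : Fin 2) t‖ = t := by
    rw [PiLp.norm_single, Real.norm_of_nonneg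
      ((zero_lt_one.trans (one_lt_arcRadius (by omega))).trans ht₁).le]
  refine ⟨EuclideanSpace.single 0 t, ⟨?_, fun h => absurd (ht ▸ h) ht₂.ne⟩,
    ⟨?_, fun h => absurd (ht ▸ h) ht₁.ne'⟩⟩ <;> rw [ht]
  · exact ⟨ht₁, ht₂.trans (arcRadius_lt_arcRadius (by omega) (by omega))⟩
  · exact ⟨(arcRadius_lt_arcRadius (by omega) (by omega)).trans ht₁, ht₂⟩

theorem combDomain_eq_iUnion_cell (r : ℝ) : combDomain r = ⋃ n, cell r n := by
  ext p
  simp only [mem_iUnion]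
  constructor
  · rintro ⟨h1, h2, hgap⟩
    obtain ⟨k, hk, hlo, hhi⟩ := exists_arcRadius_mem_Ioc h1 h2.le
    obtain ⟨m, rfl⟩ : ∃ m, k = m + 1 := ⟨k - 1, by omega⟩
    rcases hhi.lt_or_eq with hhi | heq
    · exact ⟨m, ⟨(arcRadius_lt_arcRadius (by omega) (by omega)).trans hlo, hhi⟩,
        fun h => absurd h hlo.ne'⟩
    · have hm : m ≠ 0 := by
        rintro rfl
        rw [zero_add, arcRadius_one] at heq
        exact h2.ne heq
      obtain ⟨n, rfl⟩ : ∃ n, m = n + 1 := ⟨m - 1, by omega⟩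
      exact ⟨n, ⟨heq ▸ arcRadius_lt_arcRadius (by omega) (by omega),
        heq ▸ arcRadius_lt_arcRadius (by omega) (by omega)⟩, fun h => hgap _ (by omega) h⟩
  · rintro ⟨n, ⟨hlo, hhi⟩, hgap⟩
    refine ⟨(one_lt_arcRadius (by omega)).trans hlo, hhi.trans_le (arcRadius_le_two (by omega)),
      fun k hk hpk => ?_⟩
    obtain rfl : k = n + 2 := by
      rw [hpk] at hlo hhi
      have := (arcRadius_lt_arcRadius_iff (by omega) (by omega)).1 hlo
      have := (arcRadius_lt_arcRadius_iff (by omega) (by omega)).1 hhi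
      omega
    exact hgap hpk

theorem isOpen_combDomain (r : ℝ) : IsOpen (combDomain r) :=
  combDomain_eq_iUnion_cell r ▸ isOpen_iUnion (isOpen_cell r)

theorem gapPoint_mem_combDomain {r : ℝ} (hr0 : 0 < r) (n : ℕ) :
    gapPoint (n + 2) ∈ combDomain r :=
  combDomain_eq_iUnion_cell r ▸ mem_iUnion.2 ⟨n, gapPoint_mem_cell hr0 n⟩

theorem isConnected_combDomain {r : ℝ} (hr0 : 0 < r) : IsConnected (combDomain r) :=
  ⟨⟨_, gapPoint_mem_combDomain hr0 0⟩, combDomain_eq_iUnion_cell r ▸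
    IsPreconnected.iUnion_of_chain (isPreconnected_cell hr0) (cell_inter_cell_succ_nonempty r)⟩

theorem nat_mul_le_eVariationOn_of_norm_eq_arcRadius {r : ℝ} {γ : ℝ → E2} {b : ℝ} {k : ℕ}
    (hk : 2 ≤ k) (n : ℕ) {a : ℝ} (hab : a ≤ b) (hγ : ContinuousOn γ (Icc a b))
    (hΩ : MapsTo γ (Icc a b) (combDomain r)) (ha : ‖γ a‖ = arcRadius (k + n))
    (hb : arcRadius k ≤ ‖γ b‖) :
    n * ENNReal.ofReal (2 - 2 * r) ≤ eVariationOn γ (Icc a b) := by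
  induction n generalizing a with
  | zero => simp
  | succ n ih =>
    have hlevel : arcRadius (k + n) ∈ Icc ‖γ a‖ ‖γ b‖ := by
      refine ⟨ha ▸ (arcRadius_lt_arcRadius (by omega) (by omega)).le, le_trans ?_ hb⟩
      rcases n.eq_zero_or_pos with rfl | hn
      · rfl
      · exact (arcRadius_lt_arcRadius (by omega) (by omega)).le
    obtain ⟨t, ht, hγt⟩ := intermediate_value_Icc hab (continuous_norm.comp_continuousOn hγ) hlevel
    have hgap_t : InGap r (k + n) (γ t) := (hΩ ht).2.2 _ (by omega) hγt
    have hgap_a : InGap r (k + n + 1) (γ a) := (hΩ ⟨le_rfl, hab⟩).2.2 _ (by omega) ha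
    have hjump : ENNReal.ofReal (2 - 2 * r) ≤ eVariationOn γ (Icc a t) := calc
      ENNReal.ofReal (2 - 2 * r) ≤ edist (γ t) (γ a) := by
        rw [edist_dist]
        exact ENNReal.ofReal_le_ofReal (sub_lt_dist_of_inGap_succ hgap_t hgap_a).le
      _ ≤ eVariationOn γ (Icc a t) := eVariationOn.edist_le γ ⟨ht.1, le_rfl⟩ ⟨le_rfl, ht.1⟩
    have hrest := ih ht.2 (hγ.mono (Icc_subset_Icc_left ht.1))
      (hΩ.mono_left (Icc_subset_Icc_left ht.1)) hγt
    calc ((n + 1 : ℕ) : ℝ≥0∞) * ENNReal.ofReal (2 - 2 * r)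
        = ENNReal.ofReal (2 - 2 * r) + n * ENNReal.ofReal (2 - 2 * r) := by push_cast; ring
      _ ≤ eVariationOn γ (Icc a t) + eVariationOn γ (Icc t b) := add_le_add hjump hrest
      _ = eVariationOn γ (Icc a b) := by
        simpa using eVariationOn.Icc_add_Icc γ ht.1 ht.2 (mem_univ t)

theorem geoDiam_combDomain {r : ℝ} (hr0 : 0 < r) (hr : r < 1) : geoDiam (combDomain r) = ⊤ := by
  have hc : ENNReal.ofReal (2 - 2 * r) ≠ 0 := by
    rw [Ne, ENNReal.ofReal_eq_zero, not_le]
    linarith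
  have hn (n : ℕ) : n * ENNReal.ofReal (2 - 2 * r) ≤ geoDiam (combDomain r) := by
    refine (le_geoDist fun γ hγ hΩ h0 h1 => ?_).trans
      (geoDist_le_geoDiam (gapPoint_mem_combDomain hr0 n) (gapPoint_mem_combDomain hr0 0))
    refine nat_mul_le_eVariationOn_of_norm_eq_arcRadius le_rfl n zero_le_one hγ hΩ ?_ ?_
    · rw [h0, norm_gapPoint, add_comm]
    · rw [h1, norm_gapPoint]
  rw [eq_top_iff, ← top_mul hc, ← ENNReal.iSup_natCast, ENNReal.iSup_mul]
  exact iSup_le hn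

end AnnulusComb

/-- Remove from the annulus `Ω_R = {1 < x²+y² < 4}` the closed circular
arcs `S_{2n} = {x²+y² = (1+1/(2n))², x ≤ 1−r}` and
`S_{2n+1} = {x²+y² = (1+1/(2n+1))², x ≥ r−1}`, `n ≥ 1`, for a fixed `0 < r < 1/4`. The
resulting open set `Ω` is a bounded domain with infinite geodesic diameter. -/
theorem annulus_comb_bounded_infinite_geoDiam (r : ℝ) (hr0 : 0 < r) (hr : r < 1 / 4) :
    letI ΩR : Set (EuclideanSpace ℝ (Fin 2)) :=
      {q | 1 < (q 0) ^ 2 + (q 1) ^ 2 ∧ (q 0) ^ 2 + (q 1) ^ 2 < 4}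
    letI Seven : ℕ → Set (EuclideanSpace ℝ (Fin 2)) := fun n =>
      {q | (q 0) ^ 2 + (q 1) ^ 2 = (1 + 1 / (2 * (n + 1) : ℝ)) ^ 2 ∧ q 0 ≤ 1 - r}
    letI Sodd : ℕ → Set (EuclideanSpace ℝ (Fin 2)) := fun n =>
      {q | (q 0) ^ 2 + (q 1) ^ 2 = (1 + 1 / (2 * (n + 1) + 1 : ℝ)) ^ 2 ∧ r - 1 ≤ q 0}
    letI Ω : Set (EuclideanSpace ℝ (Fin 2)) :=
      ΩR \ ((⋃ n : ℕ, Seven n) ∪ ⋃ n : ℕ, Sodd n)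
    Bornology.IsBounded Ω ∧ IsOpen Ω ∧ IsConnected Ω ∧ geoDiam Ω = ⊤ := by
  beta_reduce
  rw [AnnulusComb.annulus_diff_arcs_eq_combDomain r]
  exact ⟨AnnulusComb.isBounded_combDomain r, AnnulusComb.isOpen_combDomain r,
    AnnulusComb.isConnected_combDomain hr0, AnnulusComb.geoDiam_combDomain hr0 (by linarith)⟩
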